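/- arXiv:1803.07653 — 2 statements merged into one kernel-verified Lean document; each statement's English description precedes it below -/
import Mathlib

section
/- ∑_k ψ_{jk}·conj(ξ_k) = v_j for every j (ψ applied to conj(ξ) gives v). Consequently, if J ≠ 0 then ψ is invertible and conj(ξ_k) = ∑_j (ψ^{-1})_{kj}·v_j for every k (in the paper's notation, ξ^{k̄} = ρ_j ψ^{k̄ j}). -/
/-!
The Graham–Lee field satisfies `ξᵀ H = r v̄ᵀ` and `ξᵀ v = 1`; conjugating the first
relation with `H` Hermitian gives `H ξ̄ = r v`, and then `ψ ξ̄ = r v + (1 - r) v (v̄ᵀ ξ̄) = v`.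
For invertibility, the matrix determinant lemma `det (A + u wᵀ) = det A + wᵀ adj(A) u`, valid
without any invertibility assumption, gives `det ψ = det H + (1 - r) J`, while
`det H = det H · ξᵀ v = ξᵀ H adj(H) v = r J`. Hence `det ψ = J`.
-/

open ComplexConjugate Matrix Polynomial

namespace Matrix

variable {m R : Type*} [Fintype m] [CommRing R]

theorem add_vecMulVec_one_sub_smul_mulVec {A : Matrix m m R} {r : R} {v w y : m → R}
    (hAy : A *ᵥ y = r • v) (hwy : w ⬝ᵥ y = 1) :
    (A + vecMulVec ((1 - r) • v) w) *ᵥ y = v := by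
  rw [add_mulVec, vecMulVec_mulVec, hAy, hwy, MulOpposite.op_one, one_smul, ← add_smul,
    add_sub_cancel, one_smul]

variable [DecidableEq m]

theorem det_add_vecMulVec_of_isUnit {A : Matrix m m R} (hA : IsUnit A.det) (u w : m → R) :
    (A + vecMulVec u w).det = A.det + w ⬝ᵥ A.adjugate *ᵥ u := by
  rw [vecMulVec_eq Unit, det_add_replicateCol_mul_replicateRow hA,
    det_unique (1 + _ : Matrix Unit Unit R), Matrix.mul_assoc, ← replicateCol_mulVec,
    add_apply, replicateRow_mul_replicateCol_apply, ← cramer_eq_adjugate_mulVec,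
    ← det_smul_inv_mulVec_eq_cramer A u hA, dotProduct_smul, smul_eq_mul, one_apply_eq,
    mul_one_add]

theorem _root_.RingHom.map_det_add_vecMulVec_sub {S : Type*} [CommRing S] (f : R →+* S)
    (A : Matrix m m R) (u w : m → R) :
    f ((A + vecMulVec u w).det - A.det - w ⬝ᵥ A.adjugate *ᵥ u) =
      (f.mapMatrix A + vecMulVec (f ∘ u) (f ∘ w)).det - (f.mapMatrix A).det
        - (f ∘ w) ⬝ᵥ (f.mapMatrix A).adjugate *ᵥ (f ∘ u) := by
  simp only [map_sub, f.map_det, f.map_dotProduct, ← f.map_adjugate, map_add]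
  congr
  · ext i j; simp [vecMulVec_apply]
  · ext i; simp [f.map_mulVec]

theorem det_add_vecMulVec (A : Matrix m m R) (u w : m → R) :
    (A + vecMulVec u w).det = A.det + w ⬝ᵥ A.adjugate *ᵥ u := by
  -- `det (X • 1 + A)` is monic, so it becomes a unit in the total ring of fractions of `R[X]`,
  -- where the invertible case applies; then specialise `X = 0`.
  let B : Matrix m m R[X] := (X : R[X]) • 1 + A.map C
  have hB : B.det ∈ nonZeroDivisors R[X] :=
    Monic.mem_nonZeroDivisors (leadingCoeff_det_X_one_add_C A)
  let φ := algebraMap R[X] (FractionRing R[X])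
  have hdefect : (B + vecMulVec (C ∘ u) (C ∘ w)).det - B.det
      - (C ∘ w) ⬝ᵥ B.adjugate *ᵥ (C ∘ u) = 0 := by
    apply IsLocalization.injective (FractionRing R[X]) le_rfl
    rw [φ.map_det_add_vecMulVec_sub, map_zero, sub_sub, sub_eq_zero]
    apply det_add_vecMulVec_of_isUnit
    rw [← φ.map_det]
    exact IsLocalization.map_units _ ⟨_, hB⟩
  have hB₀ : (evalRingHom 0).mapMatrix B = A := by ext; simp [B]
  have hC₀ (x : m → R) : evalRingHom 0 ∘ C ∘ x = x := by ext; simp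
  have := congrArg (evalRingHom 0) hdefect
  rwa [(evalRingHom 0).map_det_add_vecMulVec_sub B (C ∘ u) (C ∘ w), map_zero, sub_sub,
    sub_eq_zero, hB₀, hC₀, hC₀] at this

variable {A : Matrix m m R} {r : R} {v w x : m → R}

theorem det_eq_mul_dotProduct_adjugate_mulVec (hxA : x ᵥ* A = r • w) (hxv : x ⬝ᵥ v = 1) :
    A.det = r * (w ⬝ᵥ A.adjugate *ᵥ v) :=
  calc A.det = x ⬝ᵥ (A * A.adjugate) *ᵥ v := by
        rw [mul_adjugate, smul_mulVec, one_mulVec, dotProduct_smul, hxv, smul_eq_mul, mul_one]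
    _ = r * (w ⬝ᵥ A.adjugate *ᵥ v) := by
        rw [← mulVec_mulVec, dotProduct_mulVec, hxA, smul_dotProduct, smul_eq_mul]

theorem det_add_vecMulVec_one_sub_smul (hxA : x ᵥ* A = r • w) (hxv : x ⬝ᵥ v = 1) :
    (A + vecMulVec ((1 - r) • v) w).det = w ⬝ᵥ A.adjugate *ᵥ v := by
  rw [det_add_vecMulVec, det_eq_mul_dotProduct_adjugate_mulVec hxA hxv, mulVec_smul,
    dotProduct_smul, smul_eq_mul]
  ring

end Matrix

theorem stmt_5_general (n : ℕ)
    (H : Matrix (Fin (n + 1)) (Fin (n + 1)) ℂ) (v ξ : Fin (n + 1) → ℂ) (r : ℝ)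
    (hξH : ∀ k, ∑ j, ξ j * H j k = (r : ℂ) * conj (v k))
    (hvξ : ∑ j, v j * ξ j = 1)
    (hHerm : ∀ j k, conj (H j k) = H k j)
    (J : ℂ) (hJ : J = ∑ j, ∑ k, conj (v j) * H.adjugate j k * v k)
    (ψ : Matrix (Fin (n + 1)) (Fin (n + 1)) ℂ)
    (hψ : ∀ j k, ψ j k = H j k + ((1 : ℂ) - (r : ℂ)) * v j * conj (v k)) :
    (∀ j, ∑ k, ψ j k * conj (ξ k) = v j) ∧
      (J ≠ 0 → IsUnit ψ ∧ ∀ k, conj (ξ k) = ∑ j, ψ⁻¹ k j * v j) := by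
  have hψ_mat : ψ = H + vecMulVec ((1 - (r : ℂ)) • v) (star v) := by
    ext j k; simp [hψ, vecMulVec_apply, mul_assoc]
  have hJ_dot : J = star v ⬝ᵥ H.adjugate *ᵥ v := by
    simp [hJ, dotProduct, mulVec, Finset.mul_sum, mul_assoc]
  have hξH_vec : ξ ᵥ* H = (r : ℂ) • star v := by
    ext k; simpa [vecMul, dotProduct] using hξH k
  have hξv : ξ ⬝ᵥ v = 1 := by rw [dotProduct_comm]; exact hvξ
  have hHξ : H *ᵥ star ξ = (r : ℂ) • v := by
    have hH : Hᴴ = H := by ext j k; simp [hHerm]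
    rw [← hH, ← star_vecMul, hξH_vec, star_smul, star_star, Complex.star_def, Complex.conj_ofReal]
  have hvξ_conj : star v ⬝ᵥ star ξ = 1 := by rw [star_dotProduct_star, hξv, star_one]
  have hψξ : ψ *ᵥ star ξ = v := by
    rw [hψ_mat]; exact add_vecMulVec_one_sub_smul_mulVec hHξ hvξ_conj
  have hdet : ψ.det = J := by
    rw [hψ_mat, hJ_dot]; exact det_add_vecMulVec_one_sub_smul hξH_vec hξv
  refine ⟨fun j => congrFun hψξ j, fun hJ0 => ?_⟩
  have hunit : IsUnit ψ.det := by rw [hdet]; exact hJ0.isUnit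
  refine ⟨(isUnit_iff_isUnit_det ψ).mpr hunit, fun k => ?_⟩
  have := congrFun (congrArg (ψ⁻¹ *ᵥ ·) hψξ) k
  rwa [mulVec_mulVec, nonsing_inv_mul ψ hunit, one_mulVec] at this

/-- `ψ` applied to `conj ξ` gives `v`: `∑_k ψ_{jk}·conj(ξ_k) = v_j` for all `j`.
Consequently, if `J ≠ 0` then `ψ` is invertible and `conj(ξ_k) = ∑_j (ψ⁻¹)_{kj}·v_j`,
i.e. `ξ^{k̄} = ρ_j ψ^{k̄ j}`. -/
theorem stmt_5 (n : ℕ) (hn : 1 ≤ n)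
    (H : Matrix (Fin (n + 1)) (Fin (n + 1)) ℂ) (v ξ : Fin (n + 1) → ℂ) (r : ℝ)
    (hξH : ∀ k, ∑ j, ξ j * H j k = (r : ℂ) * conj (v k))
    (hvξ : ∑ j, v j * ξ j = 1)
    (hHerm : ∀ j k, conj (H j k) = H k j)
    (J : ℂ) (hJ : J = ∑ j, ∑ k, conj (v j) * H.adjugate j k * v k)
    (ψ : Matrix (Fin (n + 1)) (Fin (n + 1)) ℂ)
    (hψ : ∀ j k, ψ j k = H j k + ((1 : ℂ) - (r : ℂ)) * v j * conj (v k)) :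
    (∀ j, ∑ k, ψ j k * conj (ξ k) = v j) ∧
      (J ≠ 0 → IsUnit ψ ∧ ∀ k, conj (ξ k) = ∑ j, ψ⁻¹ k j * v j) :=
  stmt_5_general n H v ξ r hξH hvξ hHerm J hJ ψ hψ
end

section
/- Under the Gram hypothesis on f^1,…,f^K and assuming v_w ≠ 0, for all σ, γ ∈ {1,…,n}: ∑_{μ=1}^K (f^μ_σ − (v_σ/v_w)·f^μ_w)·conj(f^μ_γ − (v_γ/v_w)·f^μ_w) = N·ν^{N−1}·h_{σγ}. (In the paper's notation, ∑_μ Z_σ f^{(μ)} · Z_{γ̄} f̄^{(μ)} = N ν^{N−1} h_{σγ̄}; this is the computation of ∑_μ |∂̄_b f̄^{(μ)}|² in the proof of Theorem 1.1.) -/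
open ComplexConjugate Matrix

/-!
Write `G` for the Gram matrix `∑_μ f^μ (f^μ)ᴴ`. Shearing by `Z_σ = ∂_σ − (v_σ / v_w) ∂_w` turns
`∑_μ Z_σ f^μ · conj (Z_γ f^μ)` into the compression of `G` to the kernel of `v`, which is linear
in `G` and kills the rank-one part `v vᴴ` since `Z_σ` annihilates `v`. Of
`G = N ν^{N-2} (ν H + (N-1) v vᴴ)` only `N ν^{N-1}` times the compression `h` of `H` survives.
-/

section LeviForm

variable {𝕜 ι : Type*} [Field 𝕜] [StarRing 𝕜]

/-- The restriction of a sesquilinear form `G` to the kernel of `v` (the complex tangent space),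
in the frame `∂_a − (v_a / v_w) ∂_w`. -/
def leviForm (v : ι → 𝕜) (w : ι) : Matrix ι ι 𝕜 →ₗ[𝕜] Matrix ι ι 𝕜 where
  toFun G := Matrix.of fun a b => G a b - v a * G w b / v w - conj (v b) * G a w / conj (v w)
    + G w w * v a * conj (v b) / (v w * conj (v w))
  map_add' G R := by ext a b; simp only [of_apply, Matrix.add_apply]; ring
  map_smul' c G := by
    ext a b
    simp only [of_apply, Matrix.smul_apply, smul_eq_mul, RingHom.id_apply]
    ring

theorem leviForm_apply (v : ι → 𝕜) (w : ι) (G : Matrix ι ι 𝕜) (a b : ι) :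
    leviForm v w G a b = G a b - v a * G w b / v w - conj (v b) * G a w / conj (v w)
      + G w w * v a * conj (v b) / (v w * conj (v w)) :=
  rfl

theorem leviForm_vecMulVec_self {v : ι → 𝕜} {w : ι} (hvw : v w ≠ 0) :
    leviForm v w (vecMulVec v (star v)) = 0 := by
  have hvw' : conj (v w) ≠ 0 := (map_ne_zero _).mpr hvw
  ext a b
  simp only [leviForm_apply, vecMulVec_apply, Pi.star_apply, Matrix.zero_apply]
  field_simp
  ring

theorem leviForm_gram {κ : Type*} [Fintype κ] (f : κ → ι → 𝕜) (v : ι → 𝕜) (w a b : ι) :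
    leviForm v w (Matrix.of fun j k => ∑ μ, f μ j * conj (f μ k)) a b =
      ∑ μ, (f μ a - v a / v w * f μ w) * conj (f μ b - v b / v w * f μ w) := by
  simp only [leviForm_apply, of_apply, Finset.sum_mul, Finset.mul_sum, Finset.sum_div,
    ← Finset.sum_sub_distrib, ← Finset.sum_add_distrib]
  refine Finset.sum_congr rfl fun μ _ => ?_
  simp only [map_sub, map_mul, map_div₀]
  ring

end LeviForm

theorem stmt_12_general (n : ℕ)
    (H : Matrix (Fin (n + 1)) (Fin (n + 1)) ℂ) (v : Fin (n + 1) → ℂ)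
    (w : Fin (n + 1))
    (hvw : v w ≠ 0)
    (h : Matrix (Fin n) (Fin n) ℂ)
    (hh : ∀ α β : Fin n, h α β =
      H α.castSucc β.castSucc - v α.castSucc * H w β.castSucc / v w
        - conj (v β.castSucc) * H α.castSucc w / conj (v w)
        + H w w * v α.castSucc * conj (v β.castSucc) / (v w * conj (v w)))
    (K : ℕ) (ν N : ℝ) (hν : 0 < ν)
    (f : Fin K → Fin (n + 1) → ℂ)
    (hGram : ∀ j k, ∑ μ, f μ j * conj (f μ k) =
      ((N * ν ^ (N - 2) : ℝ) : ℂ) * ((ν : ℂ) * H j k + ((N - 1 : ℝ) : ℂ) * v j * conj (v k))) :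
    ∀ σ γ : Fin n,
      ∑ μ, (f μ σ.castSucc - (v σ.castSucc / v w) * f μ w) *
          conj (f μ γ.castSucc - (v γ.castSucc / v w) * f μ w) =
        ((N * ν ^ (N - 1) : ℝ) : ℂ) * h σ γ := by
  intro σ γ
  have gram_eq : (Matrix.of fun j k => ∑ μ, f μ j * conj (f μ k)) =
      ((N * ν ^ (N - 2) : ℝ) : ℂ) • ((ν : ℂ) • H + ((N - 1 : ℝ) : ℂ) • vecMulVec v (star v)) := by
    ext j k
    simp only [of_apply, hGram, Matrix.smul_apply, Matrix.add_apply, vecMulVec_apply, Pi.star_apply,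
      smul_eq_mul, RCLike.star_def]
    ring
  have hpow : N * ν ^ (N - 2) * ν = N * ν ^ (N - 1) := by
    rw [mul_assoc, ← Real.rpow_add_one hν.ne']
    ring_nf
  rw [← leviForm_gram, gram_eq, map_smul, map_add, map_smul, map_smul,
    leviForm_vecMulVec_self hvw, hh, ← leviForm_apply, ← hpow]
  simp only [smul_zero, add_zero, Matrix.smul_apply, smul_eq_mul]
  push_cast
  ring

/-- Under the Gram hypothesis and `v_w ≠ 0`, for all `σ, γ ∈ {1,…,n}`:
`∑_μ (f^μ_σ − (v_σ/v_w) f^μ_w)·conj(f^μ_γ − (v_γ/v_w) f^μ_w) = N ν^{N−1} h_{σγ}`,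
i.e. `∑_μ Z_σ f^{(μ)} · Z_{γ̄} f̄^{(μ)} = N ν^{N−1} h_{σγ̄}`. -/
theorem stmt_12 (n : ℕ) (hn : 1 ≤ n)
    (H : Matrix (Fin (n + 1)) (Fin (n + 1)) ℂ) (v ξ : Fin (n + 1) → ℂ) (r : ℝ)
    (hξH : ∀ k, ∑ j, ξ j * H j k = (r : ℂ) * conj (v k))
    (hvξ : ∑ j, v j * ξ j = 1)
    (w : Fin (n + 1)) (hw : w = Fin.last n)
    (hvw : v w ≠ 0)
    (h : Matrix (Fin n) (Fin n) ℂ)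
    (hh : ∀ α β : Fin n, h α β =
      H α.castSucc β.castSucc - v α.castSucc * H w β.castSucc / v w
        - conj (v β.castSucc) * H α.castSucc w / conj (v w)
        + H w w * v α.castSucc * conj (v β.castSucc) / (v w * conj (v w)))
    (K : ℕ) (hK : 1 ≤ K) (ν N : ℝ) (hν : 0 < ν) (hN : 0 < N)
    (f : Fin K → Fin (n + 1) → ℂ)
    (hGram : ∀ j k, ∑ μ, f μ j * conj (f μ k) =
      ((N * ν ^ (N - 2) : ℝ) : ℂ) * ((ν : ℂ) * H j k + ((N - 1 : ℝ) : ℂ) * v j * conj (v k))) :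
    ∀ σ γ : Fin n,
      ∑ μ, (f μ σ.castSucc - (v σ.castSucc / v w) * f μ w) *
          conj (f μ γ.castSucc - (v γ.castSucc / v w) * f μ w) =
        ((N * ν ^ (N - 1) : ℝ) : ℂ) * h σ γ :=
  stmt_12_general n H v w hvw h hh K ν N hν f hGram
end
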